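/- arXiv:1705.06079 — 3 statements merged into one kernel-verified Lean document; each statement's English description precedes it below -/
import Mathlib

section
/- Let Ω ⊆ ℝ² be a bounded measurable set, let L := sup over unit vectors θ ∈ ℝ² and s ∈ ℝ of μH[1]({x ∈ ℝ² : ⟪x, θ⟫ = s} ∩ Ω) be finite, let σ be a nonnegative measure on S¹ × ℝ (where S¹ is the unit circle in ℝ²), let η be a finite nonnegative measure on S¹, and let ρ : ℝ² → [0, ∞) be a bounded measurable function, such that the disintegration identity ∫_{S¹×ℝ} ( ∫_{{x : ⟪x,θ⟫ = s} ∩ Ω} ψ(x, s, θ) dμH[1](x) ) dσ(θ, s) = ∫_{S¹} ( ∫_Ω ψ(x, ⟪x, θ⟫, θ) ρ(x) dx ) dη(θ) holds for every nonnegative measurable ψ : ℝ² × ℝ × S¹ → [0, ∞]. Let p ∈ [1, ∞) and let v : ℝ² → ℝ be measurable with ∫_Ω |v(x)|^p dx < ∞. Then for σ-almost every (θ, s) ∈ S¹ × ℝ, the line integral ∫_{{x : ⟪x,θ⟫ = s} ∩ Ω} |v(x)| dμH[1](x) is finite, so that the undersampled Radon transform (R v)(θ, s) := ∫_{{x : ⟪x,θ⟫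 = s} ∩ Ω} v(x) dμH[1](x) is well defined σ-almost everywhere. -/
open MeasureTheory
open scoped RealInnerProductSpace ENNReal NNReal

/-- The plane. -/
noncomputable abbrev Plane := EuclideanSpace ℝ (Fin 2)

/-- The unit circle `S¹` in the plane. -/
noncomputable abbrev UnitCircle : Set Plane := Metric.sphere (0 : Plane) 1

/-!
Applying the disintegration identity to `ψ (x, s, θ) = |v x|` bounds the `σ`-integral of the
line integrals of `|v|` by `Cρ · η(S¹) · ‖v‖_{L¹(Ω)}`, which is finite because `Ω` has finite
measure and `p ≥ 1`. A function with finite integral is finite almost everywhere once it is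
measurable; measurability of `(θ, s) ↦ ∫_{⟪x, θ⟫ = s} …` comes from the arclength
parametrization `t ↦ s θ + t Jθ` of the line (`J` the rotation by a right angle), which
carries Lebesgue measure on `ℝ` to `μH[1]` on the line and depends continuously on
`(θ, s)`.
-/

open Module Set

namespace Orientation

variable {E : Type*} [NormedAddCommGroup E] [InnerProductSpace ℝ E] [Fact (finrank ℝ E = 2)]
  (o : Orientation ℝ E (Fin 2)) {θ : E}

noncomputable def lineParam (θ : E) (s t : ℝ) : E := s • θ + t • o.rightAngleRotation θ

theorem isometry_lineParam (hθ : ‖θ‖ = 1) (s : ℝ) : Isometry (o.lineParam θ s) :=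
  Isometry.of_dist_eq fun t t' => by
    rw [dist_eq_norm, lineParam, lineParam, add_sub_add_left_eq_sub, ← sub_smul, norm_smul,
      LinearIsometryEquiv.norm_map, hθ, mul_one, Real.dist_eq, Real.norm_eq_abs]

theorem continuous_lineParam :
    Continuous fun p : (E × ℝ) × ℝ => o.lineParam p.1.1 p.1.2 p.2 := by
  unfold lineParam
  have := o.rightAngleRotation.continuous
  fun_prop

theorem inner_lineParam (hθ : ‖θ‖ = 1) (s t : ℝ) : ⟪o.lineParam θ s t, θ⟫ = s := by
  simp [lineParam, inner_add_left, inner_smul_left, hθ]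

theorem lineParam_inner_rightAngleRotation (hθ : ‖θ‖ = 1) (x : E) :
    o.lineParam θ ⟪x, θ⟫ ⟪x, o.rightAngleRotation θ⟫ = x := by
  have hθ0 : θ ≠ 0 := norm_ne_zero_iff.mp (by simp [hθ])
  refine InnerProductSpace.ext_inner_left_basis (o.basisRightAngleRotation θ hθ0) fun i => ?_
  fin_cases i <;>
    simp [lineParam, inner_add_right, inner_smul_right, hθ, real_inner_comm]

theorem range_lineParam (hθ : ‖θ‖ = 1) (s : ℝ) :
    range (o.lineParam θ s) = {x | ⟪x, θ⟫ = s} := by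
  ext x
  constructor
  · rintro ⟨t, rfl⟩
    exact o.inner_lineParam hθ s t
  · rintro (rfl : ⟪x, θ⟫ = s)
    exact ⟨_, o.lineParam_inner_rightAngleRotation hθ x⟩

variable [MeasurableSpace E] [BorelSpace E]

theorem map_lineParam_volume (hθ : ‖θ‖ = 1) (s : ℝ) :
    volume.map (o.lineParam θ s) = μH[1].restrict {x | ⟪x, θ⟫ = s} := by
  rw [← hausdorffMeasure_real,
    (o.isometry_lineParam hθ s).map_hausdorffMeasure (.inl zero_le_one), o.range_lineParam hθ s]

theorem setLIntegral_line_inter (hθ : ‖θ‖ = 1) (s : ℝ) {Ω : Set E} (hΩ : MeasurableSet Ω)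
    {f : E → ℝ≥0∞} (hf : Measurable f) :
    ∫⁻ x in {x | ⟪x, θ⟫ = s} ∩ Ω, f x ∂μH[1] = ∫⁻ t, Ω.indicator f (o.lineParam θ s t) := by
  rw [inter_comm, ← Measure.restrict_restrict hΩ, ← o.map_lineParam_volume hθ s,
    ← lintegral_indicator hΩ,
    lintegral_map (hf.indicator hΩ) (o.isometry_lineParam hθ s).continuous.measurable]

end Orientation

theorem measurable_setLIntegral_line_inter {E : Type*} [NormedAddCommGroup E]
    [InnerProductSpace ℝ E] [Fact (finrank ℝ E = 2)] [MeasurableSpace E] [BorelSpace E]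
    {Ω : Set E} (hΩ : MeasurableSet Ω) {f : E → ℝ≥0∞} (hf : Measurable f) :
    Measurable fun θs : Metric.sphere (0 : E) 1 × ℝ =>
      ∫⁻ x in {x | ⟪x, (θs.1 : E)⟫ = θs.2} ∩ Ω, f x ∂μH[1] := by
  have : FiniteDimensional ℝ E := .of_fact_finrank_eq_two
  let o : Orientation ℝ E (Fin 2) := (finBasisOfFinrankEq ℝ E Fact.out).orientation
  have hparam : Measurable fun p : (Metric.sphere (0 : E) 1 × ℝ) × ℝ =>
      Ω.indicator f (o.lineParam p.1.1 p.1.2 p.2) :=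
    (hf.indicator hΩ).comp <| o.continuous_lineParam.measurable.comp <|
      (measurable_subtype_coe.prodMap measurable_id).prodMap measurable_id
  convert hparam.lintegral_prod_right' (ν := volume) using 1
  funext θs
  exact o.setLIntegral_line_inter (norm_eq_of_mem_sphere θs.1) θs.2 hΩ hf

theorem lintegral_ofReal_abs_lt_top_of_lintegral_rpow_lt_top {α : Type*} [MeasurableSpace α]
    {μ : Measure α} [IsFiniteMeasure μ] {p : ℝ} (hp : 1 ≤ p) {v : α → ℝ}
    (hv : AEStronglyMeasurable v μ) (hvp : ∫⁻ x, ENNReal.ofReal (|v x| ^ p) ∂μ < ⊤) :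
    ∫⁻ x, ENNReal.ofReal |v x| ∂μ < ⊤ := by
  have hp' : (1 : ℝ≥0∞) ≤ ENNReal.ofReal p := by simpa using ENNReal.ofReal_le_ofReal hp
  have hmem : MemLp v (ENNReal.ofReal p) μ := by
    refine ⟨hv, (eLpNorm_lt_top_iff_lintegral_rpow_enorm_lt_top (by positivity) (by simp)).2 ?_⟩
    simpa [ENNReal.toReal_ofReal (by linarith : (0:ℝ) ≤ p), Real.enorm_eq_ofReal_abs,
      ENNReal.ofReal_rpow_of_nonneg (abs_nonneg _) (by linarith : (0:ℝ) ≤ p)] using hvp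
  exact (hmem.integrable hp').abs.lintegral_lt_top

theorem undersampled_radon_wellDefined_general
    (Ω : Set Plane) (hΩb : Bornology.IsBounded Ω) (hΩm : MeasurableSet Ω)
    (σ : Measure (↥UnitCircle × ℝ))
    (η : Measure ↥UnitCircle) (hη : IsFiniteMeasure η)
    (ρ : Plane → ℝ≥0)
    (Cρ : ℝ≥0) (hρb : ∀ x, ρ x ≤ Cρ)
    (hdis : ∀ ψ : Plane × ℝ × ↥UnitCircle → ℝ≥0∞, Measurable ψ →
      ∫⁻ θs : ↥UnitCircle × ℝ,
        (∫⁻ x in {x : Plane | ⟪x, (θs.1 : Plane)⟫ = θs.2} ∩ Ω,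
          ψ (x, θs.2, θs.1) ∂μH[1]) ∂σ
      = ∫⁻ θ : ↥UnitCircle,
          (∫⁻ x in Ω, ψ (x, ⟪x, (θ : Plane)⟫, θ) * (ρ x : ℝ≥0∞)) ∂η)
    (p : ℝ) (hp : 1 ≤ p)
    (v : Plane → ℝ) (hv : Measurable v)
    (hvp : ∫⁻ x in Ω, ENNReal.ofReal (|v x| ^ p) < ⊤) :
    ∀ᵐ θs : ↥UnitCircle × ℝ ∂σ,
      (∫⁻ x in {x : Plane | ⟪x, (θs.1 : Plane)⟫ = θs.2} ∩ Ω,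
        ENNReal.ofReal |v x| ∂μH[1]) < ⊤ := by
  have hf : Measurable fun x => ENNReal.ofReal |v x| := hv.abs.ennreal_ofReal
  have : IsFiniteMeasure (volume.restrict Ω) :=
    isFiniteMeasure_restrict.2 hΩb.measure_lt_top.ne
  have hL1 : ∫⁻ x in Ω, ENNReal.ofReal |v x| < ⊤ :=
    lintegral_ofReal_abs_lt_top_of_lintegral_rpow_lt_top hp hv.aestronglyMeasurable hvp
  have hweighted : ∫⁻ x in Ω, ENNReal.ofReal |v x| * ρ x < ⊤ :=
    calc ∫⁻ x in Ω, ENNReal.ofReal |v x| * ρ x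
        ≤ ∫⁻ x in Ω, ENNReal.ofReal |v x| * Cρ := lintegral_mono fun x => by gcongr; exact hρb x
      _ = (∫⁻ x in Ω, ENNReal.ofReal |v x|) * Cρ := lintegral_mul_const _ hf
      _ < ⊤ := ENNReal.mul_lt_top hL1 ENNReal.coe_lt_top
  have hσ := hdis (fun q => ENNReal.ofReal |v q.1|) (hf.comp measurable_fst)
  dsimp only at hσ
  rw [lintegral_const] at hσ
  have : Fact (finrank ℝ Plane = 2) := ⟨finrank_euclideanSpace_fin⟩
  exact ae_lt_top (measurable_setLIntegral_line_inter hΩm hf)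
    (hσ ▸ ENNReal.mul_ne_top hweighted.ne (measure_ne_top η univ))

/-- Well-definedness of the undersampled Radon transform: under the disintegration
identity linking `σ`, `η` and the bounded density `ρ`, for every `v ∈ L^p(Ω)` the line
integral of `|v|` is finite for `σ`-almost every measured line `(θ, s)`. -/
theorem undersampled_radon_wellDefined
    (Ω : Set Plane) (hΩb : Bornology.IsBounded Ω) (hΩm : MeasurableSet Ω)
    (L : ℝ)
    (hL : ∀ θ : Plane, ‖θ‖ = 1 → ∀ s : ℝ,
      μH[1] ({x : Plane | ⟪x, θ⟫ = s} ∩ Ω) ≤ ENNReal.ofReal L)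
    (σ : Measure (↥UnitCircle × ℝ))
    (η : Measure ↥UnitCircle) (hη : IsFiniteMeasure η)
    (ρ : Plane → ℝ≥0) (hρm : Measurable ρ)
    (Cρ : ℝ≥0) (hρb : ∀ x, ρ x ≤ Cρ)
    (hdis : ∀ ψ : Plane × ℝ × ↥UnitCircle → ℝ≥0∞, Measurable ψ →
      ∫⁻ θs : ↥UnitCircle × ℝ,
        (∫⁻ x in {x : Plane | ⟪x, (θs.1 : Plane)⟫ = θs.2} ∩ Ω,
          ψ (x, θs.2, θs.1) ∂μH[1]) ∂σ
      = ∫⁻ θ : ↥UnitCircle,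
          (∫⁻ x in Ω, ψ (x, ⟪x, (θ : Plane)⟫, θ) * (ρ x : ℝ≥0∞)) ∂η)
    (p : ℝ) (hp : 1 ≤ p)
    (v : Plane → ℝ) (hv : Measurable v)
    (hvp : ∫⁻ x in Ω, ENNReal.ofReal (|v x| ^ p) < ⊤) :
    ∀ᵐ θs : ↥UnitCircle × ℝ ∂σ,
      (∫⁻ x in {x : Plane | ⟪x, (θs.1 : Plane)⟫ = θs.2} ∩ Ω,
        ENNReal.ofReal |v x| ∂μH[1]) < ⊤ :=
  undersampled_radon_wellDefined_general Ω hΩb hΩm σ η hη ρ Cρ hρb hdis p hp v hv hvp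
end

section
/- Let Ω ⊆ ℝ² be a bounded measurable set, let L := sup over unit vectors θ ∈ ℝ² and s ∈ ℝ of μH[1]({x ∈ ℝ² : ⟪x, θ⟫ = s} ∩ Ω) be finite, let σ be a nonnegative measure on S¹ × ℝ, let η be a finite nonnegative measure on S¹, and let ρ : ℝ² → [0, ∞) be a bounded measurable function with ρ ≤ C_ρ pointwise, such that the disintegration identity ∫_{S¹×ℝ} ( ∫_{{x : ⟪x,θ⟫ = s} ∩ Ω} ψ(x, s, θ) dμH[1](x) ) dσ(θ, s) = ∫_{S¹} ( ∫_Ω ψ(x, ⟪x, θ⟫, θ) ρ(x) dx ) dη(θ) holds for every nonnegative measurable ψ : ℝ² × ℝ × S¹ → [0, ∞]. Then for every p ∈ [1, ∞) and every measurable v : ℝ² → ℝ, the bound ∫_{S¹×ℝ} ( ∫_{{x : ⟪x,θ⟫ = s} ∩ Ω} |v(x)| dμH[1](x) )^p dσ(θ, s) ≤ L^(p-1) · η(S¹) · C_ρ · ∫_Ω |v(x)|^p dx holds (as an inequality in the extended nonnegative reals). In particular the undersampled Radon transform R v (θ, s) := ∫_{{x : ⟪x,θ⟫ = s} ∩ Ω}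 v dμH[1] maps L^p(Ω) boundedly into L^p(σ). -/
open MeasureTheory
open scoped RealInnerProductSpace ENNReal NNReal

lemma lintegral_rpow_le_aux {α : Type*} [MeasurableSpace α] (μ : Measure α) {p : ℝ}
    (hp : 1 ≤ p) {f : α → ℝ≥0∞} (hf : Measurable f) :
    (∫⁻ a, f a ∂μ) ^ p ≤ (μ Set.univ) ^ (p - 1) * ∫⁻ a, f a ^ p ∂μ := by
  rcases eq_or_lt_of_le hp with h1 | h1
  · simp [← h1]
  · set q := Real.conjExponent p with hq
    have hpq : p.HolderConjugate q := Real.HolderConjugate.conjExponent h1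
    have hp0 : (0:ℝ) < p := lt_trans one_pos h1
    have key : (∫⁻ a, f a ∂μ) ≤ (∫⁻ a, f a ^ p ∂μ) ^ (1/p) * (∫⁻ a, (1:ℝ≥0∞) ^ q ∂μ) ^ (1/q) := by
      have := ENNReal.lintegral_mul_le_Lp_mul_Lq μ hpq hf.aemeasurable
        (aemeasurable_const (b := (1:ℝ≥0∞)))
      simpa using this
    have h1q : (∫⁻ a, (1:ℝ≥0∞) ^ q ∂μ) = μ Set.univ := by simp
    rw [h1q] at key
    calc (∫⁻ a, f a ∂μ) ^ p
        ≤ ((∫⁻ a, f a ^ p ∂μ) ^ (1/p) * (μ Set.univ) ^ (1/q)) ^ p :=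
          ENNReal.rpow_le_rpow key hp0.le
      _ = (μ Set.univ) ^ (p - 1) * ∫⁻ a, f a ^ p ∂μ := by
          rw [ENNReal.mul_rpow_of_nonneg _ _ hp0.le, ← ENNReal.rpow_mul, ← ENNReal.rpow_mul,
            one_div_mul_cancel hp0.ne', ENNReal.rpow_one, mul_comm]
          congr 1
          have hne : p - 1 ≠ 0 := sub_ne_zero.mpr h1.ne'
          have : 1/q * p = p - 1 := by
            rw [hq, Real.conjExponent]
            field_simp
          rw [this]

/-- Boundedness of the undersampled Radon transform: under the disintegration identity
linking `σ`, `η` and the bounded density `ρ ≤ C_ρ`, for every `p ∈ [1, ∞)` and every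
measurable `v`, `∫ (R|v|)^p dσ ≤ L^(p-1) · η(S¹) · C_ρ · ∫_Ω |v|^p dx`, so that
`R : L^p(Ω) → L^p(σ)` is bounded. -/
theorem undersampled_radon_bounded
    (Ω : Set Plane) (hΩb : Bornology.IsBounded Ω) (hΩm : MeasurableSet Ω)
    (L : ℝ) (hL0 : 0 ≤ L)
    (hL : ∀ θ : Plane, ‖θ‖ = 1 → ∀ s : ℝ,
      μH[1] ({x : Plane | ⟪x, θ⟫ = s} ∩ Ω) ≤ ENNReal.ofReal L)
    (σ : Measure (↥UnitCircle × ℝ))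
    (η : Measure ↥UnitCircle) (hη : IsFiniteMeasure η)
    (ρ : Plane → ℝ≥0) (hρm : Measurable ρ)
    (Cρ : ℝ≥0) (hρb : ∀ x, ρ x ≤ Cρ)
    (hdis : ∀ ψ : Plane × ℝ × ↥UnitCircle → ℝ≥0∞, Measurable ψ →
      ∫⁻ θs : ↥UnitCircle × ℝ,
        (∫⁻ x in {x : Plane | ⟪x, (θs.1 : Plane)⟫ = θs.2} ∩ Ω,
          ψ (x, θs.2, θs.1) ∂μH[1]) ∂σ
      = ∫⁻ θ : ↥UnitCircle,
          (∫⁻ x in Ω, ψ (x, ⟪x, (θ : Plane)⟫, θ) * (ρ x : ℝ≥0∞)) ∂η)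
    (p : ℝ) (hp : 1 ≤ p)
    (v : Plane → ℝ) (hv : Measurable v) :
    ∫⁻ θs : ↥UnitCircle × ℝ,
      (∫⁻ x in {x : Plane | ⟪x, (θs.1 : Plane)⟫ = θs.2} ∩ Ω,
        ENNReal.ofReal |v x| ∂μH[1]) ^ p ∂σ
    ≤ ENNReal.ofReal L ^ (p - 1) * η Set.univ * (Cρ : ℝ≥0∞) *
        ∫⁻ x in Ω, ENNReal.ofReal (|v x| ^ p) := by
  set f : Plane → ℝ≥0∞ := fun x => ENNReal.ofReal |v x| with hf
  have hfm : Measurable f := hv.abs.ennreal_ofReal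
  have hp0 : (0:ℝ) ≤ p := le_trans zero_le_one hp
  have hp1 : (0:ℝ) ≤ p - 1 := sub_nonneg.mpr hp
  -- Step 1: pointwise Hölder bound
  have step1 : ∀ θs : ↥UnitCircle × ℝ,
      (∫⁻ x in {x : Plane | ⟪x, (θs.1 : Plane)⟫ = θs.2} ∩ Ω, f x ∂μH[1]) ^ p
      ≤ ENNReal.ofReal L ^ (p - 1) *
        ∫⁻ x in {x : Plane | ⟪x, (θs.1 : Plane)⟫ = θs.2} ∩ Ω, f x ^ p ∂μH[1] := by
    intro θs
    have hnorm : ‖(θs.1 : Plane)‖ = 1 := by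
      have := θs.1.2
      simp only [UnitCircle, Metric.mem_sphere, dist_zero_right] at this
      simpa using this
    calc (∫⁻ x in {x : Plane | ⟪x, (θs.1 : Plane)⟫ = θs.2} ∩ Ω, f x ∂μH[1]) ^ p
        ≤ (μH[1].restrict ({x : Plane | ⟪x, (θs.1 : Plane)⟫ = θs.2} ∩ Ω) Set.univ) ^ (p - 1) *
          ∫⁻ x in {x : Plane | ⟪x, (θs.1 : Plane)⟫ = θs.2} ∩ Ω, f x ^ p ∂μH[1] :=
          lintegral_rpow_le_aux _ hp hfm
      _ ≤ ENNReal.ofReal L ^ (p - 1) *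
          ∫⁻ x in {x : Plane | ⟪x, (θs.1 : Plane)⟫ = θs.2} ∩ Ω, f x ^ p ∂μH[1] := by
          refine mul_le_mul_left (ENNReal.rpow_le_rpow ?_ hp1) _
          rw [Measure.restrict_apply_univ]
          exact hL _ hnorm θs.2
  -- Step 2: integrate over σ, pull out the constant
  have hC : ENNReal.ofReal L ^ (p - 1) ≠ ⊤ :=
    ENNReal.rpow_ne_top_of_nonneg hp1 ENNReal.ofReal_ne_top
  have step2 : ∫⁻ θs : ↥UnitCircle × ℝ,
      (∫⁻ x in {x : Plane | ⟪x, (θs.1 : Plane)⟫ = θs.2} ∩ Ω, f x ∂μH[1]) ^ p ∂σ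
      ≤ ENNReal.ofReal L ^ (p - 1) *
        ∫⁻ θs : ↥UnitCircle × ℝ,
          (∫⁻ x in {x : Plane | ⟪x, (θs.1 : Plane)⟫ = θs.2} ∩ Ω, f x ^ p ∂μH[1]) ∂σ := by
    rw [← lintegral_const_mul' _ _ hC]
    exact lintegral_mono step1
  -- Step 3: disintegration applied to ψ = f^p
  have hψm : Measurable (fun q : Plane × ℝ × ↥UnitCircle => f q.1 ^ p) :=
    (hfm.comp measurable_fst).pow_const _
  have step3 := hdis (fun q => f q.1 ^ p) hψm
  -- Step 4: bound the η-side
  have step4 : ∫⁻ θ : ↥UnitCircle, (∫⁻ x in Ω, f x ^ p * (ρ x : ℝ≥0∞)) ∂η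
      ≤ η Set.univ * ((Cρ : ℝ≥0∞) * ∫⁻ x in Ω, f x ^ p) := by
    have hin : ∀ θ : ↥UnitCircle, (∫⁻ x in Ω, f x ^ p * (ρ x : ℝ≥0∞))
        ≤ (Cρ : ℝ≥0∞) * ∫⁻ x in Ω, f x ^ p := by
      intro θ
      rw [← lintegral_const_mul' _ _ ENNReal.coe_ne_top]
      refine lintegral_mono fun x => ?_
      rw [mul_comm]
      exact mul_le_mul_left (ENNReal.coe_le_coe.mpr (hρb x)) _
    calc ∫⁻ θ : ↥UnitCircle, (∫⁻ x in Ω, f x ^ p * (ρ x : ℝ≥0∞)) ∂η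
        ≤ ∫⁻ _ : ↥UnitCircle, ((Cρ : ℝ≥0∞) * ∫⁻ x in Ω, f x ^ p) ∂η := lintegral_mono hin
      _ = η Set.univ * ((Cρ : ℝ≥0∞) * ∫⁻ x in Ω, f x ^ p) := by
          rw [lintegral_const, mul_comm]
  -- put it together
  have hfp : ∀ x, f x ^ p = ENNReal.ofReal (|v x| ^ p) := fun x =>
    ENNReal.ofReal_rpow_of_nonneg (abs_nonneg _) hp0
  calc ∫⁻ θs : ↥UnitCircle × ℝ,
      (∫⁻ x in {x : Plane | ⟪x, (θs.1 : Plane)⟫ = θs.2} ∩ Ω, f x ∂μH[1]) ^ p ∂σ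
      ≤ ENNReal.ofReal L ^ (p - 1) *
        ∫⁻ θs : ↥UnitCircle × ℝ,
          (∫⁻ x in {x : Plane | ⟪x, (θs.1 : Plane)⟫ = θs.2} ∩ Ω, f x ^ p ∂μH[1]) ∂σ := step2
    _ = ENNReal.ofReal L ^ (p - 1) *
        ∫⁻ θ : ↥UnitCircle, (∫⁻ x in Ω, f x ^ p * (ρ x : ℝ≥0∞)) ∂η := by rw [step3]
    _ ≤ ENNReal.ofReal L ^ (p - 1) *
        (η Set.univ * ((Cρ : ℝ≥0∞) * ∫⁻ x in Ω, f x ^ p)) := mul_le_mul_right step4 _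
    _ = ENNReal.ofReal L ^ (p - 1) * η Set.univ * (Cρ : ℝ≥0∞) *
        ∫⁻ x in Ω, ENNReal.ofReal (|v x| ^ p) := by
        simp only [← hfp]; ring
end

section
/- Let T > 0, let Ω ⊆ ℝ² be a bounded measurable set, and let L := sup over unit vectors θ ∈ ℝ² and s ∈ ℝ of μH[1]({x ∈ ℝ² : ⟪x, θ⟫ = s} ∩ Ω) be finite. Suppose for each t ∈ [0, T] we are given a nonnegative measure σ_t on S¹ × ℝ, a finite nonnegative measure η_t on S¹, and a bounded measurable ρ_t : ℝ² → [0, ∞), such that for every t the disintegration identity ∫_{S¹×ℝ} ( ∫_{{x : ⟪x,θ⟫ = s} ∩ Ω} ψ(x, s, θ) dμH[1](x) ) dσ_t(θ, s) = ∫_{S¹} ( ∫_Ω ψ(x, ⟪x, θ⟫, θ) ρ_t(x) dx ) dη_t(θ) holds for every nonnegative measurable ψ : ℝ² × ℝ × S¹ → [0, ∞], and there are constants C_η and C_ρ with η_t(S¹) ≤ C_η and ρ_t(x) ≤ C_ρ for all t ∈ [0, T] and x ∈ ℝ². Then for every p ∈ [1, ∞) and every measurable u : ℝ² × [0, T] →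 ℝ, ∫_0^T ∫_{S¹×ℝ} ( ∫_{{x : ⟪x,θ⟫ = s} ∩ Ω} |u(x, t)| dμH[1](x) )^p dσ_t(θ, s) dt ≤ L^(p-1) · C_η · C_ρ · ∫_0^T ∫_Ω |u(x, t)|^p dx dt (as an inequality in the extended nonnegative reals). In particular the time-dependent Radon transform (𝒜 u)(θ, s, t) := ∫_{{x : ⟪x,θ⟫ = s} ∩ Ω} u(x, t) dμH[1](x) is a bounded linear operator from L^p(Ω × [0, T]) into the L^p space over the time-fibered measurement set. -/
open MeasureTheory
open scoped RealInnerProductSpace ENNReal NNReal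

lemma holder_aux {α : Type*} [MeasurableSpace α] (μ : Measure α) (f : α → ℝ≥0∞)
    (hf : AEMeasurable f μ) {p : ℝ} (hp : 1 ≤ p) :
    (∫⁻ a, f a ∂μ) ^ p ≤ μ Set.univ ^ (p - 1) * ∫⁻ a, f a ^ p ∂μ := by
  rcases eq_or_lt_of_le hp with h1 | h1
  · simp [← h1]
  · have hpq : p.HolderConjugate (p / (p - 1)) := Real.HolderConjugate.conjExponent h1
    have h := ENNReal.lintegral_mul_le_Lp_mul_Lq μ hpq hf aemeasurable_const (g := fun _ => 1)
    simp only [mul_one, one_mul, ENNReal.one_rpow, lintegral_const, Pi.mul_apply] at h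
    have hp0 : p ≠ 0 := by positivity
    calc (∫⁻ a, f a ∂μ) ^ p
        ≤ ((∫⁻ a, f a ^ p ∂μ) ^ (1/p) * (μ Set.univ) ^ (1/(p/(p-1)))) ^ p :=
          ENNReal.rpow_le_rpow h (le_of_lt (lt_of_lt_of_le one_pos hp))
      _ = (∫⁻ a, f a ^ p ∂μ) * μ Set.univ ^ (p - 1) := by
          rw [ENNReal.mul_rpow_of_nonneg _ _ (by positivity), ← ENNReal.rpow_mul,
            ← ENNReal.rpow_mul, one_div_mul_cancel hp0, ENNReal.rpow_one]
          congr 1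
          field_simp
      _ = _ := mul_comm _ _

/-- Boundedness of the time-dependent Radon transform: under the per-time disintegration
identities linking `σ_t`, `η_t` and the densities `ρ_t`, with uniform bounds
`η_t(S¹) ≤ C_η` and `ρ_t ≤ C_ρ`, for every `p ∈ [1, ∞)` and measurable `u`,
`∫_0^T ∫ (𝒜|u|)^p dσ_t dt ≤ L^(p-1) · C_η · C_ρ · ∫_0^T ∫_Ω |u|^p dx dt`. -/
theorem timeDependent_radon_bounded
    (T : ℝ) (hT : 0 < T)
    (Ω : Set Plane) (hΩb : Bornology.IsBounded Ω) (hΩm : MeasurableSet Ω)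
    (L : ℝ) (hL0 : 0 ≤ L)
    (hL : ∀ θ : Plane, ‖θ‖ = 1 → ∀ s : ℝ,
      μH[1] ({x : Plane | ⟪x, θ⟫ = s} ∩ Ω) ≤ ENNReal.ofReal L)
    (σ : ℝ → Measure (↥UnitCircle × ℝ))
    (η : ℝ → Measure ↥UnitCircle)
    (ρ : ℝ → Plane → ℝ≥0) (hρm : ∀ t, Measurable (ρ t))
    (Cη : ℝ≥0) (hηb : ∀ t ∈ Set.Icc (0 : ℝ) T, η t Set.univ ≤ (Cη : ℝ≥0∞))
    (Cρ : ℝ≥0) (hρb : ∀ t ∈ Set.Icc (0 : ℝ) T, ∀ x, ρ t x ≤ Cρ)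
    (hdis : ∀ t ∈ Set.Icc (0 : ℝ) T,
      ∀ ψ : Plane × ℝ × ↥UnitCircle → ℝ≥0∞, Measurable ψ →
      ∫⁻ θs : ↥UnitCircle × ℝ,
        (∫⁻ x in {x : Plane | ⟪x, (θs.1 : Plane)⟫ = θs.2} ∩ Ω,
          ψ (x, θs.2, θs.1) ∂μH[1]) ∂(σ t)
      = ∫⁻ θ : ↥UnitCircle,
          (∫⁻ x in Ω, ψ (x, ⟪x, (θ : Plane)⟫, θ) * (ρ t x : ℝ≥0∞)) ∂(η t))
    (p : ℝ) (hp : 1 ≤ p)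
    (u : Plane × ℝ → ℝ) (hu : Measurable u) :
    ∫⁻ t in Set.Icc (0 : ℝ) T,
      (∫⁻ θs : ↥UnitCircle × ℝ,
        (∫⁻ x in {x : Plane | ⟪x, (θs.1 : Plane)⟫ = θs.2} ∩ Ω,
          ENNReal.ofReal |u (x, t)| ∂μH[1]) ^ p ∂(σ t))
    ≤ ENNReal.ofReal L ^ (p - 1) * (Cη : ℝ≥0∞) * (Cρ : ℝ≥0∞) *
        ∫⁻ t in Set.Icc (0 : ℝ) T, ∫⁻ x in Ω, ENNReal.ofReal (|u (x, t)| ^ p) := by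
  set c : ℝ≥0∞ := ENNReal.ofReal L ^ (p - 1) * (Cη : ℝ≥0∞) * (Cρ : ℝ≥0∞) with hc
  have hp1 : (0:ℝ) ≤ p - 1 := sub_nonneg.2 hp
  have hp0 : (0:ℝ) ≤ p := le_trans zero_le_one hp
  have hLtop : ENNReal.ofReal L ^ (p - 1) ≠ ∞ :=
    ENNReal.rpow_ne_top_of_nonneg hp1 ENNReal.ofReal_ne_top
  have hctop : c ≠ ∞ := by
    rw [hc]
    exact ENNReal.mul_ne_top (ENNReal.mul_ne_top hLtop ENNReal.coe_ne_top) ENNReal.coe_ne_top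
  have key : ∀ t ∈ Set.Icc (0:ℝ) T,
      (∫⁻ θs : ↥UnitCircle × ℝ,
        (∫⁻ x in {x : Plane | ⟪x, (θs.1 : Plane)⟫ = θs.2} ∩ Ω,
          ENNReal.ofReal |u (x, t)| ∂μH[1]) ^ p ∂(σ t))
      ≤ c * ∫⁻ x in Ω, ENNReal.ofReal (|u (x, t)| ^ p) := by
    intro t ht
    have hum : Measurable fun x : Plane => u (x, t) :=
      hu.comp (measurable_id.prodMk measurable_const)
    set f : Plane → ℝ≥0∞ := fun x => ENNReal.ofReal |u (x, t)| with hf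
    have hfm : Measurable f := hum.abs.ennreal_ofReal
    have hψm : Measurable fun q : Plane × ℝ × ↥UnitCircle =>
        ENNReal.ofReal |u (q.1, t)| ^ p :=
      ((hu.comp (measurable_fst.prodMk measurable_const)).abs.ennreal_ofReal).pow_const p
    have step1 : ∀ θs : ↥UnitCircle × ℝ,
        (∫⁻ x in {x : Plane | ⟪x, (θs.1 : Plane)⟫ = θs.2} ∩ Ω, f x ∂μH[1]) ^ p
        ≤ ENNReal.ofReal L ^ (p - 1)
          * ∫⁻ x in {x : Plane | ⟪x, (θs.1 : Plane)⟫ = θs.2} ∩ Ω, f x ^ p ∂μH[1] := by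
      intro θs
      refine le_trans (holder_aux _ f hfm.aemeasurable hp) ?_
      gcongr
      rw [Measure.restrict_apply_univ]
      exact hL θs.1 (mem_sphere_zero_iff_norm.mp θs.1.2) θs.2
    calc (∫⁻ θs : ↥UnitCircle × ℝ,
          (∫⁻ x in {x : Plane | ⟪x, (θs.1 : Plane)⟫ = θs.2} ∩ Ω, f x ∂μH[1]) ^ p ∂(σ t))
        ≤ ∫⁻ θs : ↥UnitCircle × ℝ, ENNReal.ofReal L ^ (p - 1)
            * ∫⁻ x in {x : Plane | ⟪x, (θs.1 : Plane)⟫ = θs.2} ∩ Ω, f x ^ p ∂μH[1] ∂(σ t) :=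
          lintegral_mono step1
      _ = ENNReal.ofReal L ^ (p - 1) * ∫⁻ θs : ↥UnitCircle × ℝ,
            (∫⁻ x in {x : Plane | ⟪x, (θs.1 : Plane)⟫ = θs.2} ∩ Ω, f x ^ p ∂μH[1]) ∂(σ t) :=
          lintegral_const_mul' _ _ hLtop
      _ = ENNReal.ofReal L ^ (p - 1) * ∫⁻ θ : ↥UnitCircle,
            (∫⁻ x in Ω, f x ^ p * (ρ t x : ℝ≥0∞)) ∂(η t) := by
          rw [hdis t ht (fun q => ENNReal.ofReal |u (q.1, t)| ^ p) hψm]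
      _ ≤ ENNReal.ofReal L ^ (p - 1) * ∫⁻ _θ : ↥UnitCircle,
            ((Cρ : ℝ≥0∞) * ∫⁻ x in Ω, f x ^ p) ∂(η t) := by
          gcongr with θ
          rw [mul_comm, ← lintegral_mul_const' _ _ ENNReal.coe_ne_top]
          exact lintegral_mono fun x => mul_le_mul_right (ENNReal.coe_le_coe.2 (hρb t ht x)) _
      _ = ENNReal.ofReal L ^ (p - 1) * ((Cρ : ℝ≥0∞) * ∫⁻ x in Ω, f x ^ p) * η t Set.univ := by
          rw [lintegral_const]; ring
      _ ≤ ENNReal.ofReal L ^ (p - 1) * ((Cρ : ℝ≥0∞) * ∫⁻ x in Ω, f x ^ p) * (Cη : ℝ≥0∞) := by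
          gcongr; exact hηb t ht
      _ = c * ∫⁻ x in Ω, f x ^ p := by rw [hc]; ring
      _ = c * ∫⁻ x in Ω, ENNReal.ofReal (|u (x, t)| ^ p) := by
          congr 1
          refine lintegral_congr fun x => ?_
          rw [hf]
          exact ENNReal.ofReal_rpow_of_nonneg (abs_nonneg _) hp0
  calc ∫⁻ t in Set.Icc (0:ℝ) T,
        (∫⁻ θs : ↥UnitCircle × ℝ,
          (∫⁻ x in {x : Plane | ⟪x, (θs.1 : Plane)⟫ = θs.2} ∩ Ω,
            ENNReal.ofReal |u (x, t)| ∂μH[1]) ^ p ∂(σ t))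
      ≤ ∫⁻ t in Set.Icc (0:ℝ) T, c * ∫⁻ x in Ω, ENNReal.ofReal (|u (x, t)| ^ p) :=
        lintegral_mono_ae ((ae_restrict_iff' measurableSet_Icc).2 (ae_of_all _ key))
    _ = c * ∫⁻ t in Set.Icc (0:ℝ) T, ∫⁻ x in Ω, ENNReal.ofReal (|u (x, t)| ^ p) :=
        lintegral_const_mul' _ _ hctop
end
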